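/- Fix a finite simple graph G with duplication forest Γ. For any duplicate sequence θ compatible with Γ, the quotient construction Π applied to the seed graph G₀^θ is independent of θ: the seed graph obtained by reversing the history along any compatible duplicate sequence is isomorphic to the graph Π(G) whose vertices are the trees T₁,…,T_k of Γ, with T_i adjacent to T_j (i ≠ j) iff some leaf of T_i is adjacent in G to some leaf of T_j. Consequently, for any two compatible duplicate sequences θ₁ and θ₂, the seed graphs G₀^{θ₁} and G₀^{θ₂} are isomorphic. -/

import Mathlib

open scoped Classical

universe u

variable {V : Type u}

/-- The merge (backward) operator `R_v^u(G)`: contract duplicate `v` into anchor `u`.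
Vertex `v` becomes isolated (representing its removal from the vertex set). -/
def mergeG (G : SimpleGraph V) (u v : V) : SimpleGraph V where
  Adj x y := x ≠ y ∧ x ≠ v ∧ y ≠ v ∧
    (G.Adj x y ∨ (x = u ∧ G.Adj v y) ∨ (y = u ∧ G.Adj v x))
  symm := by
    constructor
    rintro x y ⟨h1, h2, h3, h4⟩
    refine ⟨h1.symm, h3, h2, ?_⟩
    rcases h4 with h | ⟨a, b⟩ | ⟨a, b⟩
    · exact Or.inl h.symm
    · exact Or.inr (Or.inr ⟨a, b⟩)
    · exact Or.inr (Or.inl ⟨a, b⟩)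
  loopless := by constructor; rintro x ⟨h, _⟩; exact h rfl

/-- δ(v): 1 if the duplicate `v` is adjacent to its anchor `u`. -/
noncomputable def deltaI (G : SimpleGraph V) (u v : V) : ℕ :=
  if G.Adj u v then 1 else 0

/-- e(v): number of common neighbours of anchor `u` and duplicate `v`. -/
noncomputable def extI [Fintype V] (G : SimpleGraph V) (u v : V) : ℕ :=
  (G.neighborFinset u ∩ G.neighborFinset v).card

/-- ℓ(v): number of vertices (other than `u`, `v`) adjacent to exactly one of `u`, `v`. -/
noncomputable def lossI [Fintype V] (G : SimpleGraph V) (u v : V) : ℕ :=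
  (((G.neighborFinset u ∪ G.neighborFinset v) \
      (G.neighborFinset u ∩ G.neighborFinset v)) \ {u, v}).card

/-- Apply the merge operators backward along a list of (anchor, duplicate) pairs. -/
noncomputable def graphAfter (G : SimpleGraph V) (steps : List (V × V)) : SimpleGraph V :=
  steps.foldl (fun g p => mergeG g p.1 p.2) G

noncomputable def deltaNum : SimpleGraph V → List (V × V) → ℕ
  | _, [] => 0
  | G, s :: rest => deltaI G s.1 s.2 + deltaNum (mergeG G s.1 s.2) rest

noncomputable def extNum [Fintype V] : SimpleGraph V → List (V × V) → ℕ
  | _, [] => 0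
  | G, s :: rest => extI G s.1 s.2 + extNum (mergeG G s.1 s.2) rest

noncomputable def lossNum [Fintype V] : SimpleGraph V → List (V × V) → ℕ
  | _, [] => 0
  | G, s :: rest => lossI G s.1 s.2 + lossNum (mergeG G s.1 s.2) rest

/-- The likelihood of a (backward) history: product of one-step DMC transition
probabilities `p_c^{δ_i} p^{e_i} q^{ℓ_i}` with `q = (1-p)/2`. -/
noncomputable def likelihood [Fintype V] (pc p : ℝ) : SimpleGraph V → List (V × V) → ℝ
  | _, [] => 1
  | G, s :: rest =>
      pc ^ deltaI G s.1 s.2 * p ^ extI G s.1 s.2 * ((1 - p) / 2) ^ lossI G s.1 s.2 *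
        likelihood pc p (mergeG G s.1 s.2) rest

/-- Rooted binary trees. -/
inductive BTree (V : Type u) : Type u
  | leaf : V → BTree V
  | node : BTree V → BTree V → BTree V

def BTree.leaves : BTree V → List V
  | .leaf v => [v]
  | .node l r => l.leaves ++ r.leaves

/-- A duplication forest: a list of rooted binary trees. -/
abbrev Forest (V : Type u) := List (BTree V)

def Forest.leaves (Γ : Forest V) : List V := Γ.flatMap BTree.leaves

/-- Replace the cherry `{u, v}` of a tree by the single leaf `u`. -/
inductive ReplaceCherry : BTree V → V → V → BTree V → Prop
  | base_left (u v : V) : ReplaceCherry (.node (.leaf u) (.leaf v)) u v (.leaf u)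
  | base_right (u v : V) : ReplaceCherry (.node (.leaf v) (.leaf u)) u v (.leaf u)
  | left {l l' r : BTree V} {u v : V} :
      ReplaceCherry l u v l' → ReplaceCherry (.node l r) u v (.node l' r)
  | right {l r r' : BTree V} {u v : V} :
      ReplaceCherry r u v r' → ReplaceCherry (.node l r) u v (.node l r')

/-- One backward step on a duplication forest: replace the cherry `{u,v}` in one tree. -/
inductive ForestStep : Forest V → V → V → Forest V → Prop
  | head {t t' : BTree V} {ts : Forest V} {u v : V} :
      ReplaceCherry t u v t' → ForestStep (t :: ts) u v (t' :: ts)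
  | tail {t : BTree V} {ts ts' : Forest V} {u v : V} :
      ForestStep ts u v ts' → ForestStep (t :: ts) u v (t :: ts')

/-- `FUnfold Γ steps Γ₀`: the (anchor, duplicate) list `steps`, processed backward in time,
is compatible with the duplication forest `Γ` and reduces it to `Γ₀`. -/
inductive FUnfold : Forest V → List (V × V) → Forest V → Prop
  | nil (Γ : Forest V) : FUnfold Γ [] Γ
  | cons {Γ Γ' Γ₀ : Forest V} {u v : V} {steps : List (V × V)} :
      ForestStep Γ u v Γ' → FUnfold Γ' steps Γ₀ → FUnfold Γ ((u, v) :: steps) Γ₀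

/-- A forest consisting only of isolated leaves (duplication forest of a seed graph). -/
def IsSeed (Γ : Forest V) : Prop := ∀ t ∈ Γ, ∃ v, t = BTree.leaf v

/-- Π(G): the quotient graph on the trees of the duplication forest `Γ`:
tree `i` is adjacent to tree `j` (for `i ≠ j`) iff some leaf of `T_i` is adjacent
in `G` to some leaf of `T_j`. -/
def quotientGraph (G : SimpleGraph V) (Γ : Forest V) : SimpleGraph (Fin Γ.length) where
  Adj i j := i ≠ j ∧ ∃ x ∈ (Γ.get i).leaves, ∃ y ∈ (Γ.get j).leaves, G.Adj x y
  symm := by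
    constructor
    rintro i j ⟨h, x, hx, y, hy, hxy⟩
    exact ⟨h.symm, y, hy, x, hx, hxy.symm⟩
  loopless := by constructor; rintro i ⟨h, _⟩; exact h rfl

/-! Each backward step `R_v^u` deletes the duplicate `v` from its tree and hands its edges to `u`,
a leaf of the same tree. So every edge between two different trees survives as an edge between
the same two trees and no new one appears: `Π` is invariant along the history. At a seed forest
every tree is a single leaf, and there `Π` is the seed graph on the surviving vertices. The
deleted vertices are isolated, so the seed graphs of two histories differ only by equally many
isolated vertices. -/

namespace ReplaceCherry

variable {t t' : BTree V} {u v : V}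

theorem leaves_append_perm (h : ReplaceCherry t u v t') : (t'.leaves ++ [v]).Perm t.leaves := by
  induction h with
  | base_left => rfl
  | base_right => exact List.Perm.swap _ _ _
  | left _ ih =>
    simp only [BTree.leaves, List.append_assoc]
    refine (List.perm_append_comm.append_left _).trans ?_
    simpa only [List.append_assoc] using ih.append_right _
  | right _ ih =>
    simpa only [BTree.leaves, List.append_assoc] using ih.append_left _

theorem mem_leaves (h : ReplaceCherry t u v t') : u ∈ t'.leaves := by
  induction h <;> simp_all [BTree.leaves]

theorem update_mem_leaves_iff (h : ReplaceCherry t u v t') (x : V) :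
    Function.update id v u x ∈ t'.leaves ↔ x ∈ t.leaves := by
  rw [← h.leaves_append_perm.mem_iff]
  by_cases hx : x = v
  · simp [hx, h.mem_leaves]
  · simp [hx]

end ReplaceCherry

theorem Forest.eq_of_mem_getElem_leaves {Γ : Forest V} (hnd : (Forest.leaves Γ).Nodup)
    {i j : ℕ} (hi : i < Γ.length) (hj : j < Γ.length) {x : V}
    (hxi : x ∈ Γ[i].leaves) (hxj : x ∈ Γ[j].leaves) : i = j := by
  have hdisj := List.pairwise_iff_getElem.mp (List.nodup_flatMap.mp hnd).2
  by_contra hij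
  rcases Nat.lt_or_gt_of_ne hij with hlt | hlt
  · exact hdisj i j hi hj hlt hxi hxj
  · exact hdisj j i hj hi hlt hxj hxi

namespace ForestStep

variable {Γ Γ' : Forest V} {u v : V}

theorem exists_eq_set (h : ForestStep Γ u v Γ') :
    ∃ (i : ℕ) (hi : i < Γ.length) (t' : BTree V), ReplaceCherry Γ[i] u v t' ∧ Γ' = Γ.set i t' := by
  induction h with
  | head hrc => exact ⟨0, by simp, _, hrc, rfl⟩
  | tail _ ih =>
    obtain ⟨i, hi, t', hrc, rfl⟩ := ih
    exact ⟨i + 1, by simpa using hi, t', hrc, rfl⟩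

theorem length_eq (h : ForestStep Γ u v Γ') : Γ'.length = Γ.length := by
  obtain ⟨i, hi, t', -, rfl⟩ := h.exists_eq_set
  exact List.length_set

theorem leaves_append_perm (h : ForestStep Γ u v Γ') :
    (Forest.leaves Γ' ++ [v]).Perm (Forest.leaves Γ) := by
  induction h with
  | head hrc =>
    simp only [Forest.leaves, List.flatMap_cons, List.append_assoc]
    refine (List.perm_append_comm.append_left _).trans ?_
    simpa only [List.append_assoc] using hrc.leaves_append_perm.append_right _
  | tail _ ih =>
    simpa only [Forest.leaves, List.flatMap_cons, List.append_assoc] using ih.append_left _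

theorem mem_leaves (h : ForestStep Γ u v Γ') : u ∈ Forest.leaves Γ' := by
  induction h with
  | head hrc => exact List.mem_flatMap.mpr ⟨_, List.mem_cons_self, hrc.mem_leaves⟩
  | tail _ ih => exact List.mem_flatMap.mpr (by simpa [Forest.leaves] using Or.inr ih)

theorem nodup_leaves (h : ForestStep Γ u v Γ') (hnd : (Forest.leaves Γ).Nodup) :
    (Forest.leaves Γ').Nodup :=
  (h.leaves_append_perm.nodup_iff.mpr hnd).sublist (List.sublist_append_left _ _)

theorem ne (h : ForestStep Γ u v Γ') (hnd : (Forest.leaves Γ).Nodup) : u ≠ v := by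
  rintro rfl
  have := h.leaves_append_perm.nodup_iff.mpr hnd
  exact List.disjoint_of_nodup_append this h.mem_leaves (List.mem_singleton_self u)

theorem update_mem_getElem_leaves_iff (h : ForestStep Γ u v Γ') (hnd : (Forest.leaves Γ).Nodup)
    (i : ℕ) (hi : i < Γ.length) (hi' : i < Γ'.length) (x : V) :
    Function.update id v u x ∈ Γ'[i].leaves ↔ x ∈ Γ[i].leaves := by
  obtain ⟨i₀, hi₀, t', hrc, rfl⟩ := h.exists_eq_set
  rw [List.getElem_set]
  split_ifs with hii
  · subst hii
    exact hrc.update_mem_leaves_iff x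
  · have hu : u ∉ Γ[i].leaves := fun hu => hii <| Forest.eq_of_mem_getElem_leaves hnd hi₀ hi
      (hrc.leaves_append_perm.subset (List.mem_append_left _ hrc.mem_leaves)) hu
    have hv : v ∉ Γ[i].leaves := fun hv => hii <| Forest.eq_of_mem_getElem_leaves hnd hi₀ hi
      (hrc.leaves_append_perm.subset (List.mem_append_right _ (List.mem_singleton_self v))) hv
    by_cases hx : x = v
    · simp [hx, hu, hv]
    · simp [hx]

end ForestStep

def quotientGraphIsoOfImage {G H : SimpleGraph V} {Γ Γ' : Forest V} (f : V → V)
    (hH : ∀ x y, H.Adj x y ↔ x ≠ y ∧ Relation.Map G.Adj f f x y)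
    (hnd : (Forest.leaves Γ).Nodup) (hlen : Γ'.length = Γ.length)
    (hmem : ∀ (i : ℕ) (hi : i < Γ.length) (hi' : i < Γ'.length) (x : V),
      f x ∈ Γ'[i].leaves ↔ x ∈ Γ[i].leaves) :
    quotientGraph H Γ' ≃g quotientGraph G Γ where
  toEquiv := finCongr hlen
  map_rel_iff' {i j} := by
    simp only [quotientGraph, finCongr_apply, List.get_eq_getElem, Fin.val_cast, ne_eq,
      Fin.ext_iff]
    have hi : (i : ℕ) < Γ.length := hlen ▸ i.2
    have hj : (j : ℕ) < Γ.length := hlen ▸ j.2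
    refine and_congr_right fun hij => ⟨?_, ?_⟩
    · rintro ⟨x', hx', y', hy', hxy'⟩
      have hfx' := (hmem i hi i.2 x').mpr hx'
      have hne : f x' ≠ f y' := fun hf =>
        hij (Forest.eq_of_mem_getElem_leaves hnd hi hj ((hmem i hi i.2 y').mp (hf ▸ hfx')) hy')
      exact ⟨f x', hfx', f y', (hmem j hj j.2 y').mpr hy', (hH _ _).mpr ⟨hne, x', y', hxy', rfl, rfl⟩⟩
    · rintro ⟨x, hx, y, hy, hxy⟩
      obtain ⟨-, x', y', hxy', rfl, rfl⟩ := (hH x y).mp hxy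
      exact ⟨x', (hmem i hi i.2 x').mp hx, y', (hmem j hj j.2 y').mp hy, hxy'⟩

theorem mergeG_adj_iff {G : SimpleGraph V} {u v : V} (huv : u ≠ v) {x y : V} :
    (mergeG G u v).Adj x y ↔
      x ≠ y ∧ Relation.Map G.Adj (Function.update id v u) (Function.update id v u) x y := by
  have hfv : ∀ z, Function.update id v u z ≠ v := fun z => by
    by_cases hz : z = v <;> simp [hz, huv]
  constructor
  · rintro ⟨hxy, hxv, hyv, hG | ⟨rfl, hG⟩ | ⟨rfl, hG⟩⟩
    · exact ⟨hxy, x, y, hG, by simp [hxv], by simp [hyv]⟩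
    · exact ⟨hxy, v, y, hG, by simp, by simp [hyv]⟩
    · exact ⟨hxy, x, v, hG.symm, by simp [hxv], by simp⟩
  · rintro ⟨hxy, x', y', hG, rfl, rfl⟩
    refine ⟨hxy, hfv x', hfv y', ?_⟩
    by_cases hx' : x' = v <;> by_cases hy' : y' = v
    · exact absurd (hx'.trans hy'.symm) hG.ne
    · subst hx'; exact Or.inr (Or.inl ⟨by simp, by simpa [hy'] using hG⟩)
    · subst hy'; exact Or.inr (Or.inr ⟨by simp, by simpa [hx'] using hG.symm⟩)
    · exact Or.inl (by simpa [hx', hy'] using hG)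

theorem ForestStep.nonempty_quotientGraph_iso {G : SimpleGraph V} {Γ Γ' : Forest V} {u v : V}
    (h : ForestStep Γ u v Γ') (hnd : (Forest.leaves Γ).Nodup) :
    Nonempty (quotientGraph (mergeG G u v) Γ' ≃g quotientGraph G Γ) :=
  ⟨quotientGraphIsoOfImage _ (fun _ _ => mergeG_adj_iff (h.ne hnd)) hnd h.length_eq
    (h.update_mem_getElem_leaves_iff hnd)⟩

theorem not_mergeG_adj_duplicate {G : SimpleGraph V} {u v y : V} : ¬(mergeG G u v).Adj v y :=
  fun h => h.2.1 rfl

theorem not_mergeG_adj_of_forall_not_adj {G : SimpleGraph V} {u v x y : V}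
    (hx : ∀ z, ¬G.Adj x z) (hxu : x ≠ u) : ¬(mergeG G u v).Adj x y := by
  rintro ⟨-, -, -, hG | ⟨hxu', -⟩ | ⟨-, hG⟩⟩
  · exact hx y hG
  · exact hxu hxu'
  · exact hx v hG.symm

theorem IsSeed.exists_eq_map_leaf {Γ : Forest V} (h : IsSeed Γ) :
    ∃ L : List V, Γ = L.map BTree.leaf := by
  induction Γ with
  | nil => exact ⟨[], rfl⟩
  | cons t ts ih =>
    obtain ⟨x, rfl⟩ := h t List.mem_cons_self
    obtain ⟨L, rfl⟩ := ih fun t ht => h t (List.mem_cons_of_mem _ ht)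
    exact ⟨x :: L, rfl⟩

theorem Forest.leaves_map_leaf (L : List V) : Forest.leaves (L.map BTree.leaf) = L := by
  induction L with
  | nil => rfl
  | cons x L ih => exact congrArg (x :: ·) ih

noncomputable def induceIsoQuotientGraphMapLeaf (G : SimpleGraph V) {L : List V} (hL : L.Nodup) :
    G.induce {x | x ∈ L} ≃g quotientGraph G (L.map BTree.leaf) where
  toEquiv := (hL.getEquiv L).symm.trans (finCongr (List.length_map _).symm)
  map_rel_iff' {a b} := by
    simpa [quotientGraph, BTree.leaves] using fun h hab => h.ne (congrArg Subtype.val hab)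

theorem IsSeed.nonempty_induce_iso {G : SimpleGraph V} {Γ : Forest V} (h : IsSeed Γ)
    (hnd : (Forest.leaves Γ).Nodup) :
    Nonempty (G.induce {x | x ∈ Forest.leaves Γ} ≃g quotientGraph G Γ) := by
  obtain ⟨L, rfl⟩ := h.exists_eq_map_leaf
  rw [Forest.leaves_map_leaf] at hnd ⊢
  exact ⟨induceIsoQuotientGraphMapLeaf G hnd⟩

namespace FUnfold

variable {G : SimpleGraph V} {Γ Γ₀ : Forest V} {s : List (V × V)}

theorem nodup_leaves (h : FUnfold Γ s Γ₀) (hnd : (Forest.leaves Γ).Nodup) :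
    (Forest.leaves Γ₀).Nodup := by
  induction h with
  | nil => exact hnd
  | cons hstep _ ih => exact ih (hstep.nodup_leaves hnd)

theorem nonempty_quotientGraph_iso (h : FUnfold Γ s Γ₀) (hnd : (Forest.leaves Γ).Nodup) :
    Nonempty (quotientGraph (graphAfter G s) Γ₀ ≃g quotientGraph G Γ) := by
  induction h generalizing G with
  | nil => exact ⟨.refl⟩
  | cons hstep _ ih =>
    obtain ⟨e⟩ := ih (G := mergeG G _ _) (hstep.nodup_leaves hnd)
    obtain ⟨e'⟩ := hstep.nonempty_quotientGraph_iso (G := G) hnd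
    exact ⟨e.trans e'⟩

/-- A vertex leaves the forest only as a duplicate, and is isolated from then on. -/
theorem not_adj_of_not_mem_leaves (h : FUnfold Γ s Γ₀)
    (hG : ∀ x ∉ Forest.leaves Γ, ∀ y, ¬G.Adj x y) :
    ∀ x ∉ Forest.leaves Γ₀, ∀ y, ¬(graphAfter G s).Adj x y := by
  induction h generalizing G with
  | nil => exact hG
  | @cons _ _ _ u v _ hstep _ ih =>
    refine ih fun x hx y => ?_
    by_cases hxv : x = v
    · subst hxv
      exact not_mergeG_adj_duplicate
    · have hxΓ : x ∉ Forest.leaves _ := fun hxΓ => by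
        rcases List.mem_append.mp (hstep.leaves_append_perm.mem_iff.mpr hxΓ) with h | h
        · exact hx h
        · exact hxv (List.mem_singleton.mp h)
      exact not_mergeG_adj_of_forall_not_adj (hG x hxΓ) fun hxu => hx (hxu ▸ hstep.mem_leaves)

theorem nonempty_induce_iso_quotientGraph (h : FUnfold Γ s Γ₀) (hnd : (Forest.leaves Γ).Nodup)
    (hseed : IsSeed Γ₀) :
    Nonempty ((graphAfter G s).induce {x | x ∈ Forest.leaves Γ₀} ≃g quotientGraph G Γ) := by
  obtain ⟨e⟩ := hseed.nonempty_induce_iso (G := graphAfter G s) (h.nodup_leaves hnd)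
  obtain ⟨e'⟩ := h.nonempty_quotientGraph_iso (G := G) hnd
  exact ⟨e.trans e'⟩

end FUnfold

/-- Isolated vertices can be matched arbitrarily: only the number of them matters. -/
theorem SimpleGraph.nonempty_iso_of_induce_iso [Fintype V] {G H : SimpleGraph V}
    {s t : Set V} (hG : ∀ x ∉ s, ∀ y, ¬G.Adj x y) (hH : ∀ x ∉ t, ∀ y, ¬H.Adj x y)
    (e : G.induce s ≃g H.induce t) : Nonempty (G ≃g H) := by
  have hcard : Fintype.card (sᶜ : Set V) = Fintype.card (tᶜ : Set V) := by
    rw [Fintype.card_compl_set, Fintype.card_compl_set, Fintype.card_congr e.toEquiv]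
  let ψ : {x // x ∉ s} ≃ {x // x ∉ t} := Fintype.equivOfCardEq hcard
  let e' : V ≃ V := Equiv.subtypeCongr e.toEquiv ψ
  have hout : ∀ x ∉ s, e' x ∉ t := fun x hx => by
    have : e' x = ψ ⟨x, hx⟩ := by simp [e', Equiv.subtypeCongr, Equiv.sumCompl_symm_apply_of_neg hx]
    exact this ▸ (ψ ⟨x, hx⟩).2
  refine ⟨⟨e', fun {a b} => ?_⟩⟩
  by_cases ha : a ∈ s
  · by_cases hb : b ∈ s
    · simpa [e', Equiv.subtypeCongr, Equiv.sumCompl_symm_apply_of_pos ha,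
        Equiv.sumCompl_symm_apply_of_pos hb] using e.map_rel_iff (a := ⟨a, ha⟩) (b := ⟨b, hb⟩)
    · exact iff_of_false (fun hab => hH _ (hout b hb) _ hab.symm) (fun hab => hG b hb a hab.symm)
  · exact iff_of_false (hH _ (hout a ha) _) (hG a ha b)

/-- seed-graph lemma: for any duplicate sequence compatible with the
duplication forest `Γ` of `G`, the seed graph (restricted to its surviving vertices,
the leaves of the fully reduced forest) is isomorphic to the quotient graph Π(G);
consequently the seed graphs of any two compatible duplicate sequences are isomorphic. -/
theorem stmt4 [Fintype V] (G : SimpleGraph V) (Γ : Forest V)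
    (hnd : (Forest.leaves Γ).Nodup) (hall : ∀ x : V, x ∈ Forest.leaves Γ)
    (s₁ s₂ : List (V × V)) (Γ₁ Γ₂ : Forest V)
    (h₁ : FUnfold Γ s₁ Γ₁) (hseed₁ : IsSeed Γ₁)
    (h₂ : FUnfold Γ s₂ Γ₂) (hseed₂ : IsSeed Γ₂) :
    Nonempty (((graphAfter G s₁).induce {x | x ∈ Forest.leaves Γ₁}) ≃g quotientGraph G Γ) ∧
      Nonempty (graphAfter G s₁ ≃g graphAfter G s₂) := by
  have isolated : ∀ x ∉ Forest.leaves Γ, ∀ y, ¬G.Adj x y := fun x hx => absurd (hall x) hx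
  obtain ⟨e₁⟩ := h₁.nonempty_induce_iso_quotientGraph hnd hseed₁
  obtain ⟨e₂⟩ := h₂.nonempty_induce_iso_quotientGraph hnd hseed₂
  exact ⟨⟨e₁⟩, SimpleGraph.nonempty_iso_of_induce_iso (h₁.not_adj_of_not_mem_leaves isolated)
    (h₂.not_adj_of_not_mem_leaves isolated) (e₁.trans e₂.symm)⟩
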